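/- Let A = (A¹,A²,A³) and B = (B¹,B²,B³) be the spin bilinears built from two independent families of Grassmann generators ψ^±_α and φ^±_α, and define O₀ = (1/2) A·B, O₁ = (1/2) A·A, O₂ = (1/2) B·B, O₃ = (1/2)(A·A)(B·B). Then these operators satisfy: O_p² = 0 for p ∈ {1,2,3}, O₃O_n = 0 for all n ∈ {0,1,2,3}, O₁O₀ = O₂O₀ = 0, O₀² = (1/6) O₃, and O₁O₂ = (1/2) O₃. In particular, the linear span of {1, O₀, O₁, O₂, O₃} is a commutative subalgebra of the Grassmann algebra. -/
import Mathlib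


noncomputable section

/-- Grassmann algebra generated by the eight anticommuting variables
`ψ⁺_↑, ψ⁺_↓, ψ⁻_↑, ψ⁻_↓, φ⁺_↑, φ⁺_↓, φ⁻_↑, φ⁻_↓`. -/
abbrev Grass8 := ExteriorAlgebra ℂ (Fin 8 → ℂ)

def gen (i : Fin 8) : Grass8 := ExteriorAlgebra.ι ℂ (Pi.single i 1)

def psiP (α : Fin 2) : Grass8 := gen ⟨α.val, by omega⟩
def psiM (α : Fin 2) : Grass8 := gen ⟨2 + α.val, by omega⟩
def phiP (α : Fin 2) : Grass8 := gen ⟨4 + α.val, by omega⟩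
def phiM (α : Fin 2) : Grass8 := gen ⟨6 + α.val, by omega⟩

/-- The Pauli matrices. -/
def pauli : Fin 3 → Matrix (Fin 2) (Fin 2) ℂ :=
  ![!![0, 1; 1, 0], !![0, -Complex.I; Complex.I, 0], !![1, 0; 0, -1]]

def spinA (j : Fin 3) : Grass8 :=
  ∑ α : Fin 2, ∑ α' : Fin 2, pauli j α α' • (psiP α * psiM α')

def spinB (j : Fin 3) : Grass8 :=
  ∑ α : Fin 2, ∑ α' : Fin 2, pauli j α α' • (phiP α * phiM α')

def O₀ : Grass8 := (2 : ℂ)⁻¹ • ∑ j : Fin 3, spinA j * spinB j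
def O₁ : Grass8 := (2 : ℂ)⁻¹ • ∑ j : Fin 3, spinA j * spinA j
def O₂ : Grass8 := (2 : ℂ)⁻¹ • ∑ j : Fin 3, spinB j * spinB j
def O₃ : Grass8 :=
  (2 : ℂ)⁻¹ • ((∑ j : Fin 3, spinA j * spinA j) * ∑ j : Fin 3, spinB j * spinB j)

lemma gsq (i : Fin 8) : gen i * gen i = 0 := ExteriorAlgebra.ι_sq_zero _

lemma gswap (i j : Fin 8) : gen i * gen j = -(gen j * gen i) := by
  unfold gen
  exact eq_neg_of_add_eq_zero_left
    (ExteriorAlgebra.ι_add_mul_swap (R := ℂ) (Pi.single i 1 : Fin 8 → ℂ) (Pi.single j 1))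

lemma spinA_zero : spinA 0 = gen 0 * gen 3 + gen 1 * gen 2 := by
  simp [spinA, psiP, psiM, pauli, Fin.sum_univ_two]

lemma spinA_one : spinA 1 = (-Complex.I) • (gen 0 * gen 3) + Complex.I • (gen 1 * gen 2) := by
  simp [spinA, psiP, psiM, pauli, Fin.sum_univ_two]

lemma spinA_two : spinA 2 = gen 0 * gen 2 - gen 1 * gen 3 := by
  simp [spinA, psiP, psiM, pauli, Fin.sum_univ_two, sub_eq_add_neg]

lemma spinB_zero : spinB 0 = gen 4 * gen 7 + gen 5 * gen 6 := by
  simp [spinB, phiP, phiM, pauli, Fin.sum_univ_two]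

lemma spinB_one : spinB 1 = (-Complex.I) • (gen 4 * gen 7) + Complex.I • (gen 5 * gen 6) := by
  simp [spinB, phiP, phiM, pauli, Fin.sum_univ_two]

lemma spinB_two : spinB 2 = gen 4 * gen 6 - gen 5 * gen 7 := by
  simp [spinB, phiP, phiM, pauli, Fin.sum_univ_two, sub_eq_add_neg]

lemma swap_left (i j : Fin 8) (x : Grass8) : gen i * (gen j * x) = -(gen j * (gen i * x)) := by
  rw [← mul_assoc, gswap, neg_mul, mul_assoc]

lemma sq_left (i : Fin 8) (x : Grass8) : gen i * (gen i * x) = 0 := by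
  rw [← mul_assoc, gsq, zero_mul]

lemma Z13 (i j k : Fin 8) : (gen i * gen j) * (gen i * gen k) = 0 := by
  rw [mul_assoc, swap_left j i, mul_neg, sq_left, neg_zero]

lemma Z24 (i j k : Fin 8) : (gen i * gen j) * (gen k * gen j) = 0 := by
  rw [mul_assoc, swap_left j k, gsq, mul_zero, neg_zero, mul_zero]

lemma Zjk (i j k : Fin 8) : (gen i * gen j) * (gen j * gen k) = 0 := by
  rw [mul_assoc, sq_left, mul_zero]

lemma Zki (i j k : Fin 8) : (gen i * gen j) * (gen k * gen i) = 0 := by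
  rw [gswap k i, mul_neg, Z13, neg_zero]

lemma P1 (i j k l : Fin 8) :
    (gen i * gen l) * (gen j * gen k) = gen i * (gen j * (gen k * gen l)) := by
  rw [mul_assoc, swap_left l j, mul_neg, gswap l k, mul_neg, mul_neg, neg_neg]

lemma P2 (i j k l : Fin 8) :
    (gen j * gen k) * (gen i * gen l) = gen i * (gen j * (gen k * gen l)) := by
  rw [mul_assoc, swap_left k i, mul_neg, swap_left j i, neg_neg]

lemma P3 (i j k l : Fin 8) :
    (gen i * gen k) * (gen j * gen l) = -(gen i * (gen j * (gen k * gen l))) := by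
  rw [mul_assoc, swap_left k j, mul_neg]

lemma P4 (i j k l : Fin 8) :
    (gen j * gen l) * (gen i * gen k) = -(gen i * (gen j * (gen k * gen l))) := by
  rw [mul_assoc, swap_left l i, mul_neg, swap_left j i, neg_neg, gswap l k, mul_neg, mul_neg]

lemma comm_pp (i j k l : Fin 8) :
    (gen i * gen j) * (gen k * gen l) = (gen k * gen l) * (gen i * gen j) := by
  rw [mul_assoc, swap_left j k, mul_neg, swap_left i k, neg_neg, gswap j l, mul_neg, mul_neg,
    swap_left i l, mul_neg, neg_neg, ← mul_assoc]

def MA : Grass8 := gen 0 * (gen 1 * (gen 2 * gen 3))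
def MB : Grass8 := gen 4 * (gen 5 * (gen 6 * gen 7))

lemma spinA_mul : ∀ j k : Fin 3, spinA j * spinA k = if j = k then (2:ℂ) • MA else 0 := by
  have h3 : ∀ m : Fin 3, m = 0 ∨ m = 1 ∨ m = 2 := by decide
  intro j k
  rcases h3 j with rfl|rfl|rfl <;> rcases h3 k with rfl|rfl|rfl <;>
    simp only [spinA_zero, spinA_one, spinA_two, add_mul, mul_add, sub_mul, mul_sub,
      smul_mul_assoc, mul_smul_comm, Z13, Z24, Zjk, Zki,
      P1 0 1 2 3, P2 0 1 2 3, P3 0 1 2 3, P4 0 1 2 3,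
      smul_zero, smul_neg, MA, Fin.isValue, reduceIte, if_true, if_false] <;>
    simp [smul_smul, neg_mul, Complex.I_mul_I, two_smul]

lemma cpp (i j k l : Fin 8) : Commute (gen i * gen j) (gen k * gen l) := comm_pp i j k l

lemma spinB_mul : ∀ j k : Fin 3, spinB j * spinB k = if j = k then (2:ℂ) • MB else 0 := by
  have h3 : ∀ m : Fin 3, m = 0 ∨ m = 1 ∨ m = 2 := by decide
  intro j k
  rcases h3 j with rfl|rfl|rfl <;> rcases h3 k with rfl|rfl|rfl <;>
    simp only [spinB_zero, spinB_one, spinB_two, add_mul, mul_add, sub_mul, mul_sub,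
      smul_mul_assoc, mul_smul_comm, Z13, Z24, Zjk, Zki,
      P1 4 5 6 7, P2 4 5 6 7, P3 4 5 6 7, P4 4 5 6 7,
      smul_zero, smul_neg, MB, Fin.isValue, reduceIte, if_true, if_false] <;>
    simp [smul_smul, neg_mul, Complex.I_mul_I, two_smul]

lemma cAB (j k : Fin 3) : Commute (spinA j) (spinB k) := by
  have h3 : ∀ m : Fin 3, m = 0 ∨ m = 1 ∨ m = 2 := by decide
  have cp : ∀ (i i' : Fin 8) (k : Fin 3), Commute (gen i * gen i') (spinB k) := by
    intro i i' k
    rcases h3 k with rfl|rfl|rfl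
    · rw [spinB_zero]; exact (cpp i i' 4 7).add_right (cpp i i' 5 6)
    · rw [spinB_one]
      exact (Commute.smul_right (cpp i i' 4 7) _).add_right
        (Commute.smul_right (cpp i i' 5 6) _)
    · rw [spinB_two]; exact (cpp i i' 4 6).sub_right (cpp i i' 5 7)
  rcases h3 j with rfl|rfl|rfl
  · rw [spinA_zero]; exact (cp 0 3 k).add_left (cp 1 2 k)
  · rw [spinA_one]
    exact (Commute.smul_left (cp 0 3 k) _).add_left (Commute.smul_left (cp 1 2 k) _)
  · rw [spinA_two]; exact (cp 0 2 k).sub_left (cp 1 3 k)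

lemma MA_alt : MA = (gen 0 * gen 1) * (gen 2 * gen 3) := by simp [MA, mul_assoc]
lemma MB_alt : MB = (gen 4 * gen 5) * (gen 6 * gen 7) := by simp [MB, mul_assoc]

lemma cMB_A (j : Fin 3) : Commute (spinA j) MB := by
  have h3 : ∀ m : Fin 3, m = 0 ∨ m = 1 ∨ m = 2 := by decide
  have cp : ∀ (i i' : Fin 8), Commute (gen i * gen i') MB := by
    intro i i'
    rw [MB_alt]
    exact (cpp i i' 4 5).mul_right (cpp i i' 6 7)
  rcases h3 j with rfl|rfl|rfl
  · rw [spinA_zero]; exact (cp 0 3).add_left (cp 1 2)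
  · rw [spinA_one]
    exact (Commute.smul_left (cp 0 3) _).add_left (Commute.smul_left (cp 1 2) _)
  · rw [spinA_two]; exact (cp 0 2).sub_left (cp 1 3)

lemma cMA_B (j : Fin 3) : Commute (spinB j) MA := by
  have h3 : ∀ m : Fin 3, m = 0 ∨ m = 1 ∨ m = 2 := by decide
  have cp : ∀ (i i' : Fin 8), Commute (gen i * gen i') MA := by
    intro i i'
    rw [MA_alt]
    exact (cpp i i' 0 1).mul_right (cpp i i' 2 3)
  rcases h3 j with rfl|rfl|rfl
  · rw [spinB_zero]; exact (cp 4 7).add_left (cp 5 6)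
  · rw [spinB_one]
    exact (Commute.smul_left (cp 4 7) _).add_left (Commute.smul_left (cp 5 6) _)
  · rw [spinB_two]; exact (cp 4 6).sub_left (cp 5 7)

lemma cMAB : Commute MA MB := by
  rw [MA_alt, MB_alt]
  exact ((cpp 0 1 4 5).mul_right (cpp 0 1 6 7)).mul_left
    ((cpp 2 3 4 5).mul_right (cpp 2 3 6 7))


lemma MA_def : MA = gen 0 * (gen 1 * (gen 2 * gen 3)) := rfl
lemma MB_def : MB = gen 4 * (gen 5 * (gen 6 * gen 7)) := rfl
lemma MA_lassoc : MA = ((gen 0 * gen 1) * gen 2) * gen 3 := by simp [MA, mul_assoc]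
lemma MB_lassoc : MB = ((gen 4 * gen 5) * gen 6) * gen 7 := by simp [MB, mul_assoc]

lemma swap_right (x : Grass8) (i j : Fin 8) : (x * gen i) * gen j = -((x * gen j) * gen i) := by
  rw [mul_assoc, gswap, mul_neg, mul_assoc]

lemma sq_right (x : Grass8) (i : Fin 8) : (x * gen i) * gen i = 0 := by
  rw [mul_assoc, gsq, mul_zero]

lemma g0_MA : gen 0 * MA = 0 := by rw [MA_def, sq_left]
lemma g1_MA : gen 1 * MA = 0 := by rw [MA_def, swap_left 1 0, sq_left, mul_zero, neg_zero]
lemma g2_MA : gen 2 * MA = 0 := by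
  rw [MA_def, swap_left 2 0, swap_left 2 1, sq_left, mul_zero, neg_zero, mul_zero, neg_zero]
lemma g3_MA : gen 3 * MA = 0 := by
  rw [MA_def, swap_left 3 0, swap_left 3 1, swap_left 3 2, gsq, mul_zero, neg_zero, mul_zero,
    neg_zero, mul_zero, neg_zero]

lemma g4_MB : gen 4 * MB = 0 := by rw [MB_def, sq_left]
lemma g5_MB : gen 5 * MB = 0 := by rw [MB_def, swap_left 5 4, sq_left, mul_zero, neg_zero]
lemma g6_MB : gen 6 * MB = 0 := by
  rw [MB_def, swap_left 6 4, swap_left 6 5, sq_left, mul_zero, neg_zero, mul_zero, neg_zero]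
lemma g7_MB : gen 7 * MB = 0 := by
  rw [MB_def, swap_left 7 4, swap_left 7 5, swap_left 7 6, gsq, mul_zero, neg_zero, mul_zero,
    neg_zero, mul_zero, neg_zero]

lemma MA_g3 : MA * gen 3 = 0 := by rw [MA_lassoc, sq_right]
lemma MA_g2 : MA * gen 2 = 0 := by rw [MA_lassoc, swap_right, sq_right, zero_mul, neg_zero]
lemma MA_g1 : MA * gen 1 = 0 := by
  rw [MA_lassoc, swap_right, swap_right _ 2 1, mul_assoc (gen 0), gsq, mul_zero, zero_mul,
    neg_zero, zero_mul, neg_zero]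
lemma MA_g0 : MA * gen 0 = 0 := by
  rw [MA_lassoc, swap_right _ 3 0, swap_right _ 2 0, swap_right (gen 0) 1 0, gsq]
  simp

lemma MB_g7 : MB * gen 7 = 0 := by rw [MB_lassoc, sq_right]
lemma MB_g6 : MB * gen 6 = 0 := by rw [MB_lassoc, swap_right, sq_right, zero_mul, neg_zero]
lemma MB_g5 : MB * gen 5 = 0 := by
  rw [MB_lassoc, swap_right, swap_right _ 6 5, mul_assoc (gen 4), gsq, mul_zero, zero_mul,
    neg_zero, zero_mul, neg_zero]
lemma MB_g4 : MB * gen 4 = 0 := by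
  rw [MB_lassoc, swap_right _ 7 4, swap_right _ 6 4, swap_right (gen 4) 5 4, gsq]
  simp

lemma MA_spinA (j : Fin 3) : MA * spinA j = 0 := by
  have h3 : ∀ m : Fin 3, m = 0 ∨ m = 1 ∨ m = 2 := by decide
  rcases h3 j with rfl|rfl|rfl <;>
    simp [spinA_zero, spinA_one, spinA_two, mul_add, mul_sub, mul_smul_comm, ← mul_assoc,
      MA_g0, MA_g1, MA_g2, MA_g3]

lemma spinA_MA (j : Fin 3) : spinA j * MA = 0 := by
  have h3 : ∀ m : Fin 3, m = 0 ∨ m = 1 ∨ m = 2 := by decide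
  rcases h3 j with rfl|rfl|rfl <;>
    simp [spinA_zero, spinA_one, spinA_two, add_mul, sub_mul, smul_mul_assoc, mul_assoc,
      g0_MA, g1_MA, g2_MA, g3_MA]

lemma MB_spinB (j : Fin 3) : MB * spinB j = 0 := by
  have h3 : ∀ m : Fin 3, m = 0 ∨ m = 1 ∨ m = 2 := by decide
  rcases h3 j with rfl|rfl|rfl <;>
    simp [spinB_zero, spinB_one, spinB_two, mul_add, mul_sub, mul_smul_comm, ← mul_assoc,
      MB_g4, MB_g5, MB_g6, MB_g7]

lemma spinB_MB (j : Fin 3) : spinB j * MB = 0 := by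
  have h3 : ∀ m : Fin 3, m = 0 ∨ m = 1 ∨ m = 2 := by decide
  rcases h3 j with rfl|rfl|rfl <;>
    simp [spinB_zero, spinB_one, spinB_two, add_mul, sub_mul, smul_mul_assoc, mul_assoc,
      g4_MB, g5_MB, g6_MB, g7_MB]

lemma MAMA : MA * MA = 0 := by
  nth_rewrite 2 [MA_def]
  rw [← mul_assoc, MA_g0, zero_mul]

lemma MBMB : MB * MB = 0 := by
  nth_rewrite 2 [MB_def]
  rw [← mul_assoc, MB_g4, zero_mul]

lemma MABAB : (MA * MB) * (MA * MB) = 0 := by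
  rw [mul_assoc, ← mul_assoc MB MA MB, ← cMAB.eq, mul_assoc MA MB MB, MBMB, mul_zero, mul_zero]

lemma t30 (j : Fin 3) : (MA * MB) * (spinA j * spinB j) = 0 := by
  rw [mul_assoc, ← mul_assoc MB, ← (cMB_A j).eq, mul_assoc (spinA j), MB_spinB, mul_zero,
    mul_zero]

lemma t03 (j : Fin 3) : (spinA j * spinB j) * (MA * MB) = 0 := by
  rw [mul_assoc, ← mul_assoc (spinB j), (cMA_B j).eq, mul_assoc MA, spinB_MB, mul_zero,
    mul_zero]

lemma t10 (j : Fin 3) : MA * (spinA j * spinB j) = 0 := by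
  rw [← mul_assoc, MA_spinA, zero_mul]

lemma t01 (j : Fin 3) : (spinA j * spinB j) * MA = 0 := by
  rw [mul_assoc, (cMA_B j).eq, ← mul_assoc, spinA_MA, zero_mul]

lemma t20 (j : Fin 3) : MB * (spinA j * spinB j) = 0 := by
  rw [← mul_assoc, ← (cMB_A j).eq, mul_assoc, MB_spinB, mul_zero]

lemma t02 (j : Fin 3) : (spinA j * spinB j) * MB = 0 := by
  rw [mul_assoc, spinB_MB, mul_zero]

lemma t00 (j k : Fin 3) :
    (spinA j * spinB j) * (spinA k * spinB k) = (spinA j * spinA k) * (spinB j * spinB k) := by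
  rw [mul_assoc, ← mul_assoc (spinB j), ← (cAB k j).eq, mul_assoc (spinA k), ← mul_assoc]

lemma key31 : (MA * MB) * MA = 0 := by
  rw [mul_assoc, ← cMAB.eq, ← mul_assoc, MAMA, zero_mul]

lemma key13 : MA * (MA * MB) = 0 := by rw [← mul_assoc, MAMA, zero_mul]

lemma key32 : (MA * MB) * MB = 0 := by rw [mul_assoc, MBMB, mul_zero]

lemma key23 : MB * (MA * MB) = 0 := by rw [← mul_assoc, ← cMAB.eq, mul_assoc, MBMB, mul_zero]

lemma O1_eq : O₁ = (3:ℂ) • MA := by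
  simp only [O₁, Fin.sum_univ_three, spinA_mul, reduceIte, if_true]
  module

lemma O2_eq : O₂ = (3:ℂ) • MB := by
  simp only [O₂, Fin.sum_univ_three, spinB_mul, reduceIte, if_true]
  module

lemma O3_eq : O₃ = (18:ℂ) • (MA * MB) := by
  simp only [O₃, Fin.sum_univ_three, spinA_mul, spinB_mul, reduceIte, if_true, add_mul,
    mul_add, smul_mul_assoc, mul_smul_comm, smul_smul]
  module

lemma h11 : O₁ * O₁ = 0 := by
  rw [O1_eq, smul_mul_assoc, mul_smul_comm, MAMA, smul_zero, smul_zero]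

lemma h22 : O₂ * O₂ = 0 := by
  rw [O2_eq, smul_mul_assoc, mul_smul_comm, MBMB, smul_zero, smul_zero]

lemma h33 : O₃ * O₃ = 0 := by
  rw [O3_eq, smul_mul_assoc, mul_smul_comm, MABAB, smul_zero, smul_zero]

lemma h30 : O₃ * O₀ = 0 := by
  rw [O3_eq]
  simp only [O₀, Fin.sum_univ_three, mul_add, mul_smul_comm, smul_mul_assoc, t30, smul_zero,
    add_zero, zero_add]

lemma h03 : O₀ * O₃ = 0 := by
  rw [O3_eq]
  simp only [O₀, Fin.sum_univ_three, add_mul, mul_smul_comm, smul_mul_assoc, t03, smul_zero,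
    add_zero, zero_add]

lemma h31 : O₃ * O₁ = 0 := by
  rw [O3_eq, O1_eq]
  rw [smul_mul_assoc, mul_smul_comm, key31, smul_zero, smul_zero]

lemma h13 : O₁ * O₃ = 0 := by
  rw [O3_eq, O1_eq]
  rw [smul_mul_assoc, mul_smul_comm, key13, smul_zero, smul_zero]

lemma h32 : O₃ * O₂ = 0 := by
  rw [O3_eq, O2_eq]
  rw [smul_mul_assoc, mul_smul_comm, key32, smul_zero, smul_zero]

lemma h23 : O₂ * O₃ = 0 := by
  rw [O3_eq, O2_eq]
  rw [smul_mul_assoc, mul_smul_comm, key23, smul_zero, smul_zero]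

lemma h10 : O₁ * O₀ = 0 := by
  rw [O1_eq]
  simp only [O₀, Fin.sum_univ_three, mul_add, mul_smul_comm, smul_mul_assoc, t10, smul_zero,
    add_zero, zero_add]

lemma h01 : O₀ * O₁ = 0 := by
  rw [O1_eq]
  simp only [O₀, Fin.sum_univ_three, add_mul, mul_smul_comm, smul_mul_assoc, t01, smul_zero,
    add_zero, zero_add]

lemma h20 : O₂ * O₀ = 0 := by
  rw [O2_eq]
  simp only [O₀, Fin.sum_univ_three, mul_add, mul_smul_comm, smul_mul_assoc, t20, smul_zero,
    add_zero, zero_add]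

lemma h02 : O₀ * O₂ = 0 := by
  rw [O2_eq]
  simp only [O₀, Fin.sum_univ_three, add_mul, mul_smul_comm, smul_mul_assoc, t02, smul_zero,
    add_zero, zero_add]

lemma h12 : O₁ * O₂ = (2:ℂ)⁻¹ • O₃ := by
  rw [O1_eq, O2_eq, O3_eq, smul_mul_assoc, mul_smul_comm, smul_smul, smul_smul]
  (match_scalars; norm_num)

lemma h21 : O₂ * O₁ = (2:ℂ)⁻¹ • O₃ := by
  rw [O2_eq, O1_eq, O3_eq, smul_mul_assoc, mul_smul_comm, smul_smul, smul_smul, ← cMAB.eq]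
  (match_scalars; norm_num)

lemma h00 : O₀ * O₀ = (6:ℂ)⁻¹ • O₃ := by
  rw [O3_eq]
  simp only [O₀, Fin.sum_univ_three, smul_mul_assoc, mul_smul_comm, smul_smul, add_mul,
    mul_add, t00, spinA_mul, spinB_mul, Fin.reduceEq, reduceIte, zero_mul, mul_zero,
    smul_zero, add_zero, zero_add]
  match_scalars
  norm_num

attribute [local irreducible] O₀ O₁ O₂ O₃ MA MB spinA spinB gen

theorem O_algebra :
    ((O₁ * O₁ = 0 ∧ O₂ * O₂ = 0 ∧ O₃ * O₃ = 0) ∧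
     (O₃ * O₀ = 0 ∧ O₃ * O₁ = 0 ∧ O₃ * O₂ = 0 ∧ O₃ * O₃ = 0) ∧
     (O₁ * O₀ = 0 ∧ O₂ * O₀ = 0) ∧
     O₀ * O₀ = (6 : ℂ)⁻¹ • O₃ ∧
     O₁ * O₂ = (2 : ℂ)⁻¹ • O₃) ∧
    (∀ x ∈ Submodule.span ℂ ({1, O₀, O₁, O₂, O₃} : Set Grass8),
     ∀ y ∈ Submodule.span ℂ ({1, O₀, O₁, O₂, O₃} : Set Grass8),
      x * y ∈ Submodule.span ℂ ({1, O₀, O₁, O₂, O₃} : Set Grass8) ∧ x * y = y * x) := by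
  set S : Submodule ℂ Grass8 := Submodule.span ℂ ({1, O₀, O₁, O₂, O₃} : Set Grass8) with hS
  refine ⟨⟨⟨h11, h22, h33⟩, ⟨h30, h31, h32, h33⟩, ⟨h10, h20⟩, h00, h12⟩, ?_⟩
  intro x hx y hy
  refine Submodule.span_induction₂
    (p := fun a b _ _ => a * b ∈ S ∧ a * b = b * a) ?_ ?_ ?_ ?_ ?_ ?_ ?_ hx hy
  · intro p q hp hq
    simp only [Set.mem_insert_iff, Set.mem_singleton_iff] at hp hq
    have m1 : (1:Grass8) ∈ S := Submodule.subset_span (Set.mem_insert _ _)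
    have mo0 : O₀ ∈ S :=
      Submodule.subset_span (Set.mem_insert_of_mem _ (Set.mem_insert _ _))
    have mo1 : O₁ ∈ S :=
      Submodule.subset_span (Set.mem_insert_of_mem _ (Set.mem_insert_of_mem _
        (Set.mem_insert _ _)))
    have mo2 : O₂ ∈ S :=
      Submodule.subset_span (Set.mem_insert_of_mem _ (Set.mem_insert_of_mem _
        (Set.mem_insert_of_mem _ (Set.mem_insert _ _))))
    have mo3 : O₃ ∈ S :=
      Submodule.subset_span (Set.mem_insert_of_mem _ (Set.mem_insert_of_mem _
        (Set.mem_insert_of_mem _ (Set.mem_insert_of_mem _ rfl))))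
    rcases hp with rfl|rfl|rfl|rfl|rfl <;> rcases hq with rfl|rfl|rfl|rfl|rfl <;>
      refine ⟨?_, ?_⟩ <;>
      simp only [one_mul, mul_one, h00, h01, h10, h02, h20, h03, h30, h11, h12, h21, h13,
        h31, h22, h23, h32, h33] <;>
      first
        | rfl
        | exact S.zero_mem
        | exact S.smul_mem _ mo3
        | exact m1
        | exact mo0
        | exact mo1
        | exact mo2
        | exact mo3
  · intro y hy
    exact ⟨by rw [zero_mul]; exact S.zero_mem, by rw [zero_mul, mul_zero]⟩
  · intro x hx
    exact ⟨by rw [mul_zero]; exact S.zero_mem, by rw [mul_zero, zero_mul]⟩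
  · rintro x y z hx hy hz ⟨m1, c1⟩ ⟨m2, c2⟩
    exact ⟨by rw [add_mul]; exact S.add_mem m1 m2, by rw [add_mul, mul_add, c1, c2]⟩
  · rintro x y z hx hy hz ⟨m1, c1⟩ ⟨m2, c2⟩
    exact ⟨by rw [mul_add]; exact S.add_mem m1 m2, by rw [mul_add, add_mul, c1, c2]⟩
  · rintro r x y hx hy ⟨m, c⟩
    exact ⟨by rw [smul_mul_assoc]; exact S.smul_mem r m,
      by rw [smul_mul_assoc, mul_smul_comm, c]⟩
  · rintro r x y hx hy ⟨m, c⟩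
    exact ⟨by rw [mul_smul_comm]; exact S.smul_mem r m,
      by rw [mul_smul_comm, smul_mul_assoc, c]⟩

end
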